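/- arXiv:1406.5461 — 6 statements merged into one kernel-verified Lean document; each statement's English description precedes it below -/
import Mathlib

section
/- Assume the coexistence condition (ss): r_n/(1+Q_n) > 1. Then the point E* = (B*, P*) defined by B_1* = s_1, B_j* = s_j − s_{j−1} for 1 < j ≤ n, P_j* = (r_j − r_{j+1})/(1+Q_n) for 1 ≤ j < n, and P_n* = r_n/(1+Q_n) − 1 has all 2n components strictly positive, is an equilibrium of (LV) (the right-hand sides of all 2n equations vanish at E*), satisfies Σ_{i=1}^n B_i* = s_n and Σ_{i=1}^n r_i B_i* = Q_n, and is the unique equilibrium of (LV) with all 2n components strictly positive. -/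
open Filter

noncomputable def lvQ (r s : ℕ → ℝ) (k : ℕ) : ℝ :=
  (∑ i ∈ Finset.Icc 1 (k - 1), s i * (r i - r (i + 1))) + s k * r k

noncomputable def lvBstar (s : ℕ → ℝ) (j : ℕ) : ℝ :=
  if j = 1 then s 1 else s j - s (j - 1)

noncomputable def lvPstar (n : ℕ) (r s : ℕ → ℝ) (j : ℕ) : ℝ :=
  if j = n then r n / (1 + lvQ r s n) - 1 else (r j - r (j + 1)) / (1 + lvQ r s n)

def IsEquilibLV (n : ℕ) (r s : ℕ → ℝ) (B P : ℕ → ℝ) : Prop :=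
  (∀ i ∈ Finset.Icc 1 n,
      r i * B i * (1 - 1 / r i - ∑ j ∈ Finset.Icc 1 n, (B j + s j * P j))
        - B i * ∑ j ∈ Finset.Icc i n, P j = 0) ∧
  (∀ i ∈ Finset.Icc 1 n, (s i)⁻¹ * P i * ((∑ j ∈ Finset.Icc 1 i, B j) - s i) = 0)

/-! At positive densities the virus equations say that the bacterial partial sums
`∑_{j ≤ k} B_j` equal `s_k`, which pins down `B = B*`. The bacterial equations say that the
virus tail sums `∑_{j ≥ i} P_j` equal `r_i c - 1`, where `c = 1 - ∑_j (B_j + s_j P_j)`, which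
pins down `P` as an explicit function of the single number `c`. Substituting back gives
`1 - c = Q_n c`, so `c = 1 / (1 + Q_n)` and `P = P*`. -/

open Finset

section SumsOverIcc

variable {M : Type*}

lemma sum_Icc_one_pred_add [AddCommMonoid M] (f : ℕ → M) {k : ℕ} (hk : 1 ≤ k) :
    ∑ i ∈ Icc 1 (k - 1), f i + f k = ∑ i ∈ Icc 1 k, f i := by
  obtain ⟨m, rfl⟩ : ∃ m, k = m + 1 := ⟨k - 1, by omega⟩
  rw [Nat.add_sub_cancel, sum_Icc_succ_top (by omega)]

lemma add_sum_Icc_succ [AddCommMonoid M] (f : ℕ → M) {i n : ℕ} (hi : i ≤ n) :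
    f i + ∑ j ∈ Icc (i + 1) n, f j = ∑ j ∈ Icc i n, f j := by
  rw [Icc_add_one_left_eq_Ioc, add_sum_Ioc_eq_sum_Icc hi]

variable [AddCommGroup M] {n : ℕ} {f g : ℕ → M}

lemma eq_of_sum_Icc_one_eq
    (h : ∀ k ∈ Icc 1 n, ∑ j ∈ Icc 1 k, f j = ∑ j ∈ Icc 1 k, g j) :
    ∀ i ∈ Icc 1 n, f i = g i := by
  intro i hi
  have hi1 := (mem_Icc.1 hi).1
  have hprev : ∑ j ∈ Icc 1 (i - 1), f j = ∑ j ∈ Icc 1 (i - 1), g j := by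
    rcases Nat.eq_zero_or_pos (i - 1) with h0 | hpos
    · simp [h0]
    · exact h (i - 1) (mem_Icc.2 ⟨hpos, by have := (mem_Icc.1 hi).2; omega⟩)
  have := h i hi
  rw [← sum_Icc_one_pred_add f hi1, ← sum_Icc_one_pred_add g hi1, hprev] at this
  exact add_left_cancel this

lemma eq_of_sum_Icc_tail_eq
    (h : ∀ i ∈ Icc 1 n, ∑ j ∈ Icc i n, f j = ∑ j ∈ Icc i n, g j) :
    ∀ i ∈ Icc 1 n, f i = g i := by
  intro i hi
  obtain ⟨hi1, hin⟩ := mem_Icc.1 hi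
  have hnext : ∑ j ∈ Icc (i + 1) n, f j = ∑ j ∈ Icc (i + 1) n, g j := by
    rcases hin.eq_or_lt with rfl | hlt
    · simp
    · exact h (i + 1) (mem_Icc.2 ⟨by omega, hlt⟩)
  have := h i hi
  rw [← add_sum_Icc_succ f hin, ← add_sum_Icc_succ g hin, hnext] at this
  exact add_right_cancel this

end SumsOverIcc

lemma lvBstar_succ (s : ℕ → ℝ) {k : ℕ} (hk : 1 ≤ k) :
    lvBstar s (k + 1) = s (k + 1) - s k := by
  simp [lvBstar, show k ≠ 0 by omega]

lemma lvQ_succ (r s : ℕ → ℝ) {k : ℕ} (hk : 1 ≤ k) :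
    lvQ r s (k + 1) = lvQ r s k + r (k + 1) * (s (k + 1) - s k) := by
  simp only [lvQ, Nat.add_sub_cancel, ← sum_Icc_one_pred_add _ hk]
  ring

lemma sum_Icc_lvBstar (s : ℕ → ℝ) {k : ℕ} (hk : 1 ≤ k) :
    ∑ i ∈ Icc 1 k, lvBstar s i = s k := by
  induction k, hk using Nat.le_induction with
  | base => simp [lvBstar]
  | succ k hk ih => rw [sum_Icc_succ_top (by omega), ih, lvBstar_succ s hk]; ring

lemma sum_Icc_mul_lvBstar (r s : ℕ → ℝ) {k : ℕ} (hk : 1 ≤ k) :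
    ∑ i ∈ Icc 1 k, r i * lvBstar s i = lvQ r s k := by
  induction k, hk using Nat.le_induction with
  | base => simp [lvBstar, lvQ, mul_comm]
  | succ k hk ih => rw [sum_Icc_succ_top (by omega), ih, lvBstar_succ s hk, lvQ_succ r s hk]

lemma lvBstar_pos {n : ℕ} {s : ℕ → ℝ} (hs1 : 0 < s 1)
    (hs : ∀ i, 1 ≤ i → i < n → s i < s (i + 1)) : ∀ i ∈ Icc 1 n, 0 < lvBstar s i := by
  intro i hi
  obtain ⟨hi1, hin⟩ := mem_Icc.1 hi
  rcases hi1.eq_or_lt with rfl | hlt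
  · simpa [lvBstar] using hs1
  · obtain ⟨k, rfl⟩ : ∃ k, i = k + 1 := ⟨i - 1, by omega⟩
    rw [lvBstar_succ s (by omega), sub_pos]
    exact hs k (by omega) (by omega)

/-- The virus densities whose tail sums are `∑_{j ≥ i} P_j = r_i c - 1`. -/
noncomputable def lvPofLevel (n : ℕ) (r : ℕ → ℝ) (c : ℝ) (j : ℕ) : ℝ :=
  if j = n then r n * c - 1 else (r j - r (j + 1)) * c

section VirusProfile

variable {n : ℕ} {r : ℕ → ℝ} {c : ℝ}

lemma lvPstar_eq_lvPofLevel (s : ℕ → ℝ) :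
    lvPstar n r s = lvPofLevel n r (1 + lvQ r s n)⁻¹ := by
  funext j
  simp only [lvPstar, lvPofLevel, div_eq_mul_inv]

lemma sum_Icc_lvPofLevel_tail {i : ℕ} (hi : i ≤ n) :
    ∑ j ∈ Icc i n, lvPofLevel n r c j = r i * c - 1 := by
  induction hi using Nat.decreasingInduction with
  | self => simp [lvPofLevel]
  | of_succ i hin ih =>
    rw [← add_sum_Icc_succ _ hin.le, ih]
    simp only [lvPofLevel, hin.ne, if_false]
    ring

lemma sum_Icc_mul_lvPofLevel (s : ℕ → ℝ) (hn : 1 ≤ n) :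
    ∑ j ∈ Icc 1 n, s j * lvPofLevel n r c j = lvQ r s n * c - s n := by
  have hlow : ∀ j ∈ Icc 1 (n - 1), s j * lvPofLevel n r c j = s j * (r j - r (j + 1)) * c := by
    intro j hj
    simp only [lvPofLevel, show j ≠ n by grind, if_false]
    ring
  rw [← sum_Icc_one_pred_add _ hn, lvQ, sum_congr rfl hlow, ← sum_mul]
  simp only [lvPofLevel, if_true]
  ring

lemma lvPofLevel_pos (hr : ∀ i, 1 ≤ i → i < n → r (i + 1) < r i) (hc : 0 < c)
    (hrc : 1 < r n * c) : ∀ i ∈ Icc 1 n, 0 < lvPofLevel n r c i := by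
  intro i hi
  obtain ⟨hi1, hin⟩ := mem_Icc.1 hi
  unfold lvPofLevel
  split_ifs with h
  · linarith
  · exact mul_pos (sub_pos.2 (hr i hi1 (by omega))) hc

end VirusProfile

lemma lv_bacteria_eq_zero_iff {r B S T : ℝ} (hr : r ≠ 0) (hB : B ≠ 0) :
    r * B * (1 - 1 / r - S) - B * T = 0 ↔ T = r * (1 - S) - 1 := by
  have : r * B * (1 - 1 / r - S) - B * T = B * (r * (1 - S) - 1 - T) := by
    field_simp
    ring
  rw [this, mul_eq_zero, or_iff_right hB, sub_eq_zero, eq_comm]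

lemma lv_virus_eq_zero_iff {s P X : ℝ} (hs : s ≠ 0) (hP : P ≠ 0) :
    s⁻¹ * P * (X - s) = 0 ↔ X = s := by
  simp [hs, hP, sub_eq_zero]

section Equilibria

variable {n : ℕ} {r s B P : ℕ → ℝ}

theorem isEquilibLV_iff (hr : ∀ i ∈ Icc 1 n, r i ≠ 0) (hs : ∀ i ∈ Icc 1 n, s i ≠ 0)
    (hB : ∀ i ∈ Icc 1 n, B i ≠ 0) (hP : ∀ i ∈ Icc 1 n, P i ≠ 0) :
    IsEquilibLV n r s B P ↔
      (∀ k ∈ Icc 1 n, ∑ j ∈ Icc 1 k, B j = s k) ∧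
      ∀ i ∈ Icc 1 n,
        ∑ j ∈ Icc i n, P j = r i * (1 - ∑ j ∈ Icc 1 n, (B j + s j * P j)) - 1 :=
  and_comm.trans <| and_congr
    (forall₂_congr fun k hk => lv_virus_eq_zero_iff (hs k hk) (hP k hk))
    (forall₂_congr fun i hi => lv_bacteria_eq_zero_iff (hr i hi) (hB i hi))

lemma sum_Icc_lvBstar_add_mul_lvPofLevel (hn : 1 ≤ n) (c : ℝ) :
    ∑ j ∈ Icc 1 n, (lvBstar s j + s j * lvPofLevel n r c j) = lvQ r s n * c := by
  rw [sum_add_distrib, sum_Icc_lvBstar s hn, sum_Icc_mul_lvPofLevel s hn]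
  ring

theorem isEquilibLV_lvBstar_lvPstar (hn : 1 ≤ n) (hr : ∀ i ∈ Icc 1 n, r i ≠ 0)
    (hs : ∀ i ∈ Icc 1 n, s i ≠ 0) (hD : 1 + lvQ r s n ≠ 0)
    (hpos : ∀ i ∈ Icc 1 n, 0 < lvBstar s i ∧ 0 < lvPstar n r s i) :
    IsEquilibLV n r s (lvBstar s) (lvPstar n r s) := by
  rw [isEquilibLV_iff hr hs (fun i hi => (hpos i hi).1.ne') (fun i hi => (hpos i hi).2.ne')]
  refine ⟨fun k hk => sum_Icc_lvBstar s (mem_Icc.1 hk).1, fun i hi => ?_⟩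
  have hlevel : 1 - lvQ r s n * (1 + lvQ r s n)⁻¹ = (1 + lvQ r s n)⁻¹ := by
    field_simp [hD]
    ring
  rw [lvPstar_eq_lvPofLevel, sum_Icc_lvPofLevel_tail (mem_Icc.1 hi).2,
    sum_Icc_lvBstar_add_mul_lvPofLevel hn, hlevel]

theorem eq_lvBstar_lvPstar_of_isEquilibLV (hn : 1 ≤ n) (hr : ∀ i ∈ Icc 1 n, r i ≠ 0)
    (hs : ∀ i ∈ Icc 1 n, s i ≠ 0) (hpos : ∀ i ∈ Icc 1 n, 0 < B i ∧ 0 < P i)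
    (h : IsEquilibLV n r s B P) :
    ∀ i ∈ Icc 1 n, B i = lvBstar s i ∧ P i = lvPstar n r s i := by
  obtain ⟨hBsum, hPtail⟩ :=
    (isEquilibLV_iff hr hs (fun i hi => (hpos i hi).1.ne') (fun i hi => (hpos i hi).2.ne')).1 h
  set c := 1 - ∑ j ∈ Icc 1 n, (B j + s j * P j) with hc_def
  have hB : ∀ i ∈ Icc 1 n, B i = lvBstar s i := eq_of_sum_Icc_one_eq fun k hk =>
    (hBsum k hk).trans (sum_Icc_lvBstar s (mem_Icc.1 hk).1).symm
  have hP : ∀ i ∈ Icc 1 n, P i = lvPofLevel n r c i := eq_of_sum_Icc_tail_eq fun i hi =>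
    (hPtail i hi).trans (sum_Icc_lvPofLevel_tail (mem_Icc.1 hi).2).symm
  have hc : c = (1 + lvQ r s n)⁻¹ := by
    have hsum : ∑ j ∈ Icc 1 n, (B j + s j * P j) = lvQ r s n * c := by
      rw [← sum_Icc_lvBstar_add_mul_lvPofLevel hn c]
      exact sum_congr rfl fun j hj => by rw [hB j hj, hP j hj]
    refine eq_inv_of_mul_eq_one_left ?_
    linarith
  intro i hi
  exact ⟨hB i hi, by rw [hP i hi, hc, lvPstar_eq_lvPofLevel]⟩

end Equilibria

theorem stmt0
    (n : ℕ) (hn : 1 ≤ n) (r s : ℕ → ℝ)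
    (hr : ∀ i, 1 ≤ i → i < n → r (i + 1) < r i) (hrn : 1 < r n)
    (hs1 : 0 < s 1) (hs : ∀ i, 1 ≤ i → i < n → s i < s (i + 1))
    (hss : 1 < r n / (1 + lvQ r s n)) :
    (∀ i ∈ Finset.Icc 1 n, 0 < lvBstar s i ∧ 0 < lvPstar n r s i) ∧
    IsEquilibLV n r s (lvBstar s) (lvPstar n r s) ∧
    (∑ i ∈ Finset.Icc 1 n, lvBstar s i) = s n ∧
    (∑ i ∈ Finset.Icc 1 n, r i * lvBstar s i) = lvQ r s n ∧
    (∀ B P : ℕ → ℝ,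
      (∀ i ∈ Finset.Icc 1 n, 0 < B i ∧ 0 < P i) →
      IsEquilibLV n r s B P →
      ∀ i ∈ Finset.Icc 1 n, B i = lvBstar s i ∧ P i = lvPstar n r s i) := by
  have hr_anti : StrictAntiOn r (Set.Icc 1 n) := strictAntiOn_of_succ_lt Set.ordConnected_Icc
    fun i _ hi hi' => by simpa using hr i hi.1 (by simpa using hi'.2)
  have hs_mono : StrictMonoOn s (Set.Icc 1 n) := strictMonoOn_of_lt_succ Set.ordConnected_Icc
    fun i _ hi hi' => by simpa using hs i hi.1 (by simpa using hi'.2)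
  have hr0 : ∀ i ∈ Icc 1 n, r i ≠ 0 := fun i hi => by
    have := hr_anti.antitoneOn (by simpa using hi) (by simpa using hn) (mem_Icc.1 hi).2
    linarith
  have hs0 : ∀ i ∈ Icc 1 n, s i ≠ 0 := fun i hi => by
    have := hs_mono.monotoneOn (by simpa using hn) (by simpa using hi) (mem_Icc.1 hi).1
    linarith
  have hD : 0 < 1 + lvQ r s n := (div_pos_iff_of_pos_left (by linarith)).1 (one_pos.trans hss)
  have hpos : ∀ i ∈ Icc 1 n, 0 < lvBstar s i ∧ 0 < lvPstar n r s i := fun i hi =>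
    ⟨lvBstar_pos hs1 hs i hi, by
      rw [lvPstar_eq_lvPofLevel]
      exact lvPofLevel_pos hr (inv_pos.2 hD) (by rwa [← div_eq_mul_inv]) i hi⟩
  exact ⟨hpos, isEquilibLV_lvBstar_lvPstar hn hr0 hs0 hD.ne' hpos, sum_Icc_lvBstar s hn,
    sum_Icc_mul_lvBstar r s hn,
    fun _ _ hBP h => eq_lvBstar_lvPstar_of_isEquilibLV hn hr0 hs0 hBP h⟩
end

section
/- If there exists an equilibrium (B,P) of (LV) with B_i > 0 and P_i > 0 for all 1 ≤ i ≤ n, then r_n/(1+Q_n) > 1. -/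
/-! Write `u = 1 - ∑ j, (B j + s j * P j)` for the free resource. At a positive equilibrium the
virus equation for `P n` gives `∑ j, B j = s n`, and the bacteria equations say that the tail
sums `∑_{j ≥ i} P j` equal `r i * u - 1`. Differencing them gives `P i = (r i - r (i + 1)) * u`
for `i < n`, hence `∑ j, (B j + s j * P j) = u * Q n`, i.e. `u * (1 + Q n) = 1`. Therefore
`r n / (1 + Q n) = r n * u = 1 + P n > 1`. -/

open Filter

open Finset

theorem apply_le_apply_of_forall_le_add_one {β : Type*} [Preorder β] {f : ℕ → β} {a b : ℕ}
    (h : ∀ i, a ≤ i → i < b → f i ≤ f (i + 1)) (hab : a ≤ b) : f a ≤ f b := by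
  induction b, hab using Nat.le_induction with
  | base => exact le_rfl
  | succ b hab ih => exact (ih fun i hi hib => h i hi (by omega)).trans (h b hab (by omega))

noncomputable def lvResource (n : ℕ) (s B P : ℕ → ℝ) : ℝ :=
  1 - ∑ j ∈ Icc 1 n, (B j + s j * P j)

theorem sum_mul_eq_mul_lvQ_sub_of_tail_sum {n : ℕ} (hn : 1 ≤ n) {r s P : ℕ → ℝ} {u : ℝ}
    (htail : ∀ i ∈ Icc 1 n, ∑ j ∈ Icc i n, P j = r i * u - 1) :
    ∑ j ∈ Icc 1 n, s j * P j = u * lvQ r s n - s n := by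
  obtain ⟨m, rfl⟩ : ∃ m, n = m + 1 := ⟨n - 1, by omega⟩
  have hP : ∀ i ∈ Icc 1 m, P i = (r i - r (i + 1)) * u := by
    intro i hi
    obtain ⟨hi1, him⟩ := mem_Icc.1 hi
    have htail_i := htail i (mem_Icc.2 ⟨hi1, by omega⟩)
    rw [← add_sum_Ioc_eq_sum_Icc (by omega), ← Icc_add_one_left_eq_Ioc,
      htail (i + 1) (mem_Icc.2 ⟨by omega, by omega⟩)] at htail_i
    linarith
  have hPn : P (m + 1) = r (m + 1) * u - 1 := by
    simpa using htail (m + 1) (mem_Icc.2 ⟨hn, le_rfl⟩)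
  calc ∑ j ∈ Icc 1 (m + 1), s j * P j
      = ∑ i ∈ Icc 1 m, u * (s i * (r i - r (i + 1))) + s (m + 1) * P (m + 1) := by
        rw [sum_Icc_succ_top (by omega)]
        congr 1
        exact sum_congr rfl fun i hi => by rw [hP i hi]; ring
    _ = u * lvQ r s (m + 1) - s (m + 1) := by
        rw [← mul_sum, hPn, lvQ, Nat.add_sub_cancel]; ring

namespace IsEquilibLV

variable {n : ℕ} {r s B P : ℕ → ℝ}

theorem tail_sum_P_eq (heq : IsEquilibLV n r s B P)
    (hpos : ∀ i ∈ Icc 1 n, 0 < B i ∧ 0 < P i) :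
    ∀ i ∈ Icc 1 n, ∑ j ∈ Icc i n, P j = r i * lvResource n s B P - 1 := by
  intro i hi
  obtain ⟨hi1, hin⟩ := mem_Icc.1 hi
  have htail_pos : 0 < ∑ j ∈ Icc i n, P j :=
    sum_pos (fun j hj => (hpos j (Icc_subset_Icc hi1 le_rfl hj)).2) (nonempty_Icc.2 hin)
  have hgrowth : r i * (1 - 1 / r i - ∑ j ∈ Icc 1 n, (B j + s j * P j)) =
      ∑ j ∈ Icc i n, P j := by
    refine mul_left_cancel₀ (hpos i hi).1.ne' ?_
    linear_combination heq.1 i hi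
  -- `r i = 0` would make the left side of `hgrowth` vanish, but the tail sum is positive.
  have hri : r i ≠ 0 := by
    rintro hri
    rw [hri, zero_mul] at hgrowth
    exact htail_pos.ne hgrowth
  rw [← hgrowth, lvResource]
  field_simp
  ring

theorem sum_B_eq {i : ℕ} (heq : IsEquilibLV n r s B P) (hi : i ∈ Icc 1 n) (hsi : s i ≠ 0)
    (hPi : P i ≠ 0) : ∑ j ∈ Icc 1 i, B j = s i := by
  have h := heq.2 i hi
  rw [mul_eq_zero, mul_eq_zero, inv_eq_zero, sub_eq_zero] at h
  exact h.resolve_left (not_or.2 ⟨hsi, hPi⟩)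

theorem lvResource_mul_one_add_lvQ (heq : IsEquilibLV n r s B P) (hn : 1 ≤ n)
    (hpos : ∀ i ∈ Icc 1 n, 0 < B i ∧ 0 < P i) (hsn : s n ≠ 0) :
    lvResource n s B P * (1 + lvQ r s n) = 1 := by
  have hn' : n ∈ Icc 1 n := mem_Icc.2 ⟨hn, le_rfl⟩
  have hsP := sum_mul_eq_mul_lvQ_sub_of_tail_sum (s := s) hn (heq.tail_sum_P_eq hpos)
  set u := lvResource n s B P with hu
  rw [lvResource, sum_add_distrib, heq.sum_B_eq hn' hsn (hpos n hn').2.ne', hsP] at hu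
  linear_combination hu

end IsEquilibLV

theorem stmt1_general
    (n : ℕ) (hn : 1 ≤ n) (r s : ℕ → ℝ)
    (hs1 : 0 < s 1) (hs : ∀ i, 1 ≤ i → i < n → s i < s (i + 1))
    (B P : ℕ → ℝ)
    (hpos : ∀ i ∈ Finset.Icc 1 n, 0 < B i ∧ 0 < P i)
    (heq : IsEquilibLV n r s B P) :
    1 < r n / (1 + lvQ r s n) := by
  have hn' : n ∈ Icc 1 n := mem_Icc.2 ⟨hn, le_rfl⟩
  have hsn : 0 < s n :=
    hs1.trans_le (apply_le_apply_of_forall_le_add_one (fun i hi hin => (hs i hi hin).le) hn)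
  have hPn : P n = r n * lvResource n s B P - 1 := by
    simpa using heq.tail_sum_P_eq hpos n hn'
  have hu := heq.lvResource_mul_one_add_lvQ hn hpos hsn.ne'
  have hratio : r n / (1 + lvQ r s n) = r n * lvResource n s B P := by
    rw [div_eq_iff (right_ne_zero_of_mul_eq_one hu)]
    linear_combination -(r n) * hu
  rw [hratio]
  linarith [(hpos n hn').2]

theorem stmt1
    (n : ℕ) (hn : 1 ≤ n) (r s : ℕ → ℝ)
    (hr : ∀ i, 1 ≤ i → i < n → r (i + 1) < r i) (hrn : 1 < r n)
    (hs1 : 0 < s 1) (hs : ∀ i, 1 ≤ i → i < n → s i < s (i + 1))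
    (B P : ℕ → ℝ)
    (hpos : ∀ i ∈ Finset.Icc 1 n, 0 < B i ∧ 0 < P i)
    (heq : IsEquilibLV n r s B P) :
    1 < r n / (1 + lvQ r s n) :=
  stmt1_general n hn r s hs1 hs B P hpos heq
end

section
/- (Competitive exclusion among virus.) Let (B,P) be a solution of (LV) in Ω and let 1 ≤ i < j ≤ n. If P_i(0) > 0, P_j(0) > 0, and B_k(0) = 0 for all i < k ≤ j, then P_j(t) → 0 as t → ∞. -/
open Filter

def IsSolutionLV (n : ℕ) (r s : ℕ → ℝ) (B P : ℕ → ℝ → ℝ) : Prop :=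
  (∀ i ∈ Finset.Icc 1 n, ∀ t : ℝ, 0 ≤ t →
      HasDerivAt (B i)
        (r i * B i t * (1 - 1 / r i - ∑ j ∈ Finset.Icc 1 n, (B j t + s j * P j t))
          - B i t * ∑ j ∈ Finset.Icc i n, P j t) t) ∧
  (∀ i ∈ Finset.Icc 1 n, ∀ t : ℝ, 0 ≤ t →
      HasDerivAt (P i) ((s i)⁻¹ * P i t * ((∑ j ∈ Finset.Icc 1 i, B j t) - s i)) t) ∧
  (∀ t : ℝ, 0 ≤ t → (∀ i ∈ Finset.Icc 1 n, 0 ≤ B i t ∧ 0 ≤ P i t) ∧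
      (∑ i ∈ Finset.Icc 1 n, (B i t + s i * P i t)) ≤ 1)

open Real

/-!
Along any solution, a host population that starts at zero stays at zero: its per-capita growth
rate is bounded above, so Grönwall's inequality traps it at `0`. Hence `B_k ≡ 0` for `i < k ≤ j`,
and the viruses `P_i` and `P_j` feed on the same resource `Q = ∑_{m ≤ i} B_m`, so that
`(s_ℓ log P_ℓ)' = Q - s_ℓ` for `ℓ = i, j`. The resource cancels in
`s_j log P_j - s_i log P_i + (s_j - s_i) t`, which is therefore constant. Since `s_i P_i ≤ 1` on
`Ω`, this forces `s_j log P_j(t) ≤ C - (s_j - s_i) t`, and `s_i < s_j` gives `P_j(t) → 0`.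
-/

theorem strictMonoOn_Icc_of_lt_add_one {α : Type*} [Preorder α] {f : ℕ → α} {a b : ℕ}
    (hf : ∀ k, a ≤ k → k < b → f k < f (k + 1)) : StrictMonoOn f (Set.Icc a b) :=
  strictMonoOn_of_lt_succ Set.ordConnected_Icc fun k _ hk hk' => by
    rw [Order.succ_eq_add_one] at hk' ⊢
    exact hf k hk.1 hk'.2

theorem sum_Icc_one_eq_of_eq_zero {M : Type*} [AddCommMonoid M] {f : ℕ → M} {i j : ℕ}
    (hij : i ≤ j) (hf : ∀ k, i < k → k ≤ j → f k = 0) :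
    ∑ k ∈ Finset.Icc 1 j, f k = ∑ k ∈ Finset.Icc 1 i, f k := by
  have hIoc : ∀ m, Finset.Icc 1 m = Finset.Ioc 0 m := Finset.Icc_add_one_left_eq_Ioc 0
  rw [hIoc, hIoc, ← Finset.sum_Ioc_consecutive _ (Nat.zero_le i) hij,
    Finset.sum_eq_zero (s := Finset.Ioc i j) fun k hk => hf k (Finset.mem_Ioc.1 hk).1
      (Finset.mem_Ioc.1 hk).2, add_zero]

theorem le_mul_exp_of_deriv_le_mul {x x' : ℝ → ℝ} {c : ℝ}
    (hx : ∀ t, 0 ≤ t → HasDerivAt x (x' t) t) (hle : ∀ t, 0 ≤ t → x' t ≤ c * x t)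
    {t : ℝ} (ht : 0 ≤ t) : x t ≤ x 0 * exp (c * t) := by
  set g : ℝ → ℝ := fun u => x u * exp (-c * u)
  have hg : ∀ u, 0 ≤ u → HasDerivAt g ((x' u - c * x u) * exp (-c * u)) u := fun u hu =>
    ((hx u hu).mul ((hasDerivAt_id' u).const_mul (-c)).exp).congr_deriv (by ring)
  have hanti : AntitoneOn g (Set.Ici 0) := by
    refine antitoneOn_of_hasDerivWithinAt_nonpos (f' := fun u => (x' u - c * x u) * exp (-c * u))
      (convex_Ici 0)
      (fun u hu => (hg u hu).continuousAt.continuousWithinAt) (fun u hu => ?_) (fun u hu => ?_)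
    all_goals rw [interior_Ici] at hu
    · exact (hg u (le_of_lt hu)).hasDerivWithinAt
    · exact mul_nonpos_of_nonpos_of_nonneg (by linarith [hle u (le_of_lt hu)]) (exp_pos _).le
  have hgt : g t ≤ g 0 := hanti Set.self_mem_Ici ht ht
  calc x t = g t * exp (c * t) := by simp only [g, mul_assoc, ← exp_add, neg_mul, neg_add_cancel,
          exp_zero, mul_one]
    _ ≤ g 0 * exp (c * t) := by gcongr
    _ = x 0 * exp (c * t) := by simp [g]

theorem mul_exp_le_of_mul_le_deriv {x x' : ℝ → ℝ} {c : ℝ}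
    (hx : ∀ t, 0 ≤ t → HasDerivAt x (x' t) t) (hle : ∀ t, 0 ≤ t → c * x t ≤ x' t)
    {t : ℝ} (ht : 0 ≤ t) : x 0 * exp (c * t) ≤ x t := by
  have := le_mul_exp_of_deriv_le_mul (x := fun u => -x u) (x' := fun u => -x' u) (c := c)
    (fun u hu => (hx u hu).neg) (fun u hu => by linarith [hle u hu]) ht
  linarith

theorem eq_of_hasDerivAt_zero_of_nonneg {f : ℝ → ℝ} (hf : ∀ t, 0 ≤ t → HasDerivAt f 0 t)
    {t : ℝ} (ht : 0 ≤ t) : f t = f 0 :=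
  constant_of_has_deriv_right_zero (fun u hu => (hf u hu.1).continuousAt.continuousWithinAt)
    (fun u hu => (hf u hu.1).hasDerivWithinAt) t ⟨ht, le_rfl⟩

theorem tendsto_zero_of_mul_log_le {x : ℝ → ℝ} {a b C : ℝ} (ha : 0 < a) (hb : 0 < b)
    (hx : ∀ t, 0 ≤ t → 0 < x t) (hlog : ∀ t, 0 ≤ t → a * log (x t) ≤ C - b * t) :
    Tendsto x atTop (nhds 0) := by
  have hlin : Tendsto (fun t => (C - b * t) / a) atTop atBot :=
    (tendsto_atBot_add_const_left _ C
      (tendsto_neg_atTop_atBot.comp (tendsto_id.const_mul_atTop hb))).atBot_div_const ha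
  refine tendsto_of_tendsto_of_tendsto_of_le_of_le' tendsto_const_nhds
    (tendsto_exp_atBot.comp hlin) ?_ ?_
  all_goals filter_upwards [eventually_ge_atTop 0] with t ht
  · exact (hx t ht).le
  · rw [Function.comp_apply, ← exp_log (hx t ht), exp_le_exp, le_div_iff₀ ha, mul_comm]
    exact hlog t ht

namespace IsSolutionLV

variable {n : ℕ} {r s : ℕ → ℝ} {B P : ℕ → ℝ → ℝ}

theorem B_nonneg (h : IsSolutionLV n r s B P) {m : ℕ} (hm : m ∈ Finset.Icc 1 n) {t : ℝ}
    (ht : 0 ≤ t) : 0 ≤ B m t :=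
  ((h.2.2 t ht).1 m hm).1

theorem P_nonneg (h : IsSolutionLV n r s B P) {m : ℕ} (hm : m ∈ Finset.Icc 1 n) {t : ℝ}
    (ht : 0 ≤ t) : 0 ≤ P m t :=
  ((h.2.2 t ht).1 m hm).2

theorem sum_B_nonneg (h : IsSolutionLV n r s B P) {ℓ : ℕ} (hℓ : ℓ ≤ n) {t : ℝ} (ht : 0 ≤ t) :
    0 ≤ ∑ m ∈ Finset.Icc 1 ℓ, B m t :=
  Finset.sum_nonneg fun _ hm =>
    h.B_nonneg (Finset.mem_Icc.2 ⟨(Finset.mem_Icc.1 hm).1, (Finset.mem_Icc.1 hm).2.trans hℓ⟩) ht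

theorem mul_P_le_one (h : IsSolutionLV n r s B P) (hs : ∀ m ∈ Finset.Icc 1 n, 0 ≤ s m)
    {ℓ : ℕ} (hℓ : ℓ ∈ Finset.Icc 1 n) {t : ℝ} (ht : 0 ≤ t) : s ℓ * P ℓ t ≤ 1 := by
  have hterm : ∀ m ∈ Finset.Icc 1 n, 0 ≤ B m t + s m * P m t := fun m hm =>
    add_nonneg (h.B_nonneg hm ht) (mul_nonneg (hs m hm) (h.P_nonneg hm ht))
  linarith [Finset.single_le_sum hterm hℓ, (h.2.2 t ht).2, h.B_nonneg hℓ ht]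

theorem B_rhs_le_mul (h : IsSolutionLV n r s B P) (hs : ∀ m ∈ Finset.Icc 1 n, 0 ≤ s m)
    {k : ℕ} (hk : k ∈ Finset.Icc 1 n) {t : ℝ} (ht : 0 ≤ t) :
    r k * B k t * (1 - 1 / r k - ∑ m ∈ Finset.Icc 1 n, (B m t + s m * P m t))
        - B k t * ∑ m ∈ Finset.Icc k n, P m t
      ≤ (|r k * (1 - 1 / r k)| + |r k|) * B k t := by
  set S := ∑ m ∈ Finset.Icc 1 n, (B m t + s m * P m t)
  have hS0 : 0 ≤ S := Finset.sum_nonneg fun m hm =>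
    add_nonneg (h.B_nonneg hm ht) (mul_nonneg (hs m hm) (h.P_nonneg hm ht))
  have hT : 0 ≤ ∑ m ∈ Finset.Icc k n, P m t := Finset.sum_nonneg fun m hm =>
    h.P_nonneg (Finset.mem_Icc.2 ⟨(Finset.mem_Icc.1 hk).1.trans (Finset.mem_Icc.1 hm).1,
      (Finset.mem_Icc.1 hm).2⟩) ht
  have hrS : -(r k * S) ≤ |r k| :=
    calc -(r k * S) ≤ |r k * S| := neg_le_abs _
      _ = |r k| * S := by rw [abs_mul, abs_of_nonneg hS0]
      _ ≤ |r k| := mul_le_of_le_one_right (abs_nonneg _) (h.2.2 t ht).2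
  have hrate : r k * (1 - 1 / r k - S) - ∑ m ∈ Finset.Icc k n, P m t
      ≤ |r k * (1 - 1 / r k)| + |r k| := by
    linarith [le_abs_self (r k * (1 - 1 / r k))]
  calc r k * B k t * (1 - 1 / r k - S) - B k t * ∑ m ∈ Finset.Icc k n, P m t
      = B k t * (r k * (1 - 1 / r k - S) - ∑ m ∈ Finset.Icc k n, P m t) := by ring
    _ ≤ B k t * (|r k * (1 - 1 / r k)| + |r k|) :=
        mul_le_mul_of_nonneg_left hrate (h.B_nonneg hk ht)
    _ = _ := mul_comm _ _

theorem B_eq_zero (h : IsSolutionLV n r s B P) (hs : ∀ m ∈ Finset.Icc 1 n, 0 ≤ s m)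
    {k : ℕ} (hk : k ∈ Finset.Icc 1 n) (h0 : B k 0 = 0) {t : ℝ} (ht : 0 ≤ t) : B k t = 0 := by
  refine le_antisymm ?_ (h.B_nonneg hk ht)
  simpa [h0] using le_mul_exp_of_deriv_le_mul (h.1 k hk) (fun u hu => h.B_rhs_le_mul hs hk hu) ht

theorem P_pos (h : IsSolutionLV n r s B P) {ℓ : ℕ} (hℓ : ℓ ∈ Finset.Icc 1 n) (hsℓ : 0 < s ℓ)
    (h0 : 0 < P ℓ 0) {t : ℝ} (ht : 0 ≤ t) : 0 < P ℓ t := by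
  refine lt_of_lt_of_le (by positivity) (mul_exp_le_of_mul_le_deriv (c := -1) (h.2.1 ℓ hℓ)
    (fun u hu => ?_) ht)
  have hQ := h.sum_B_nonneg (Finset.mem_Icc.1 hℓ).2 hu
  have : 0 ≤ (s ℓ)⁻¹ * P ℓ u * ∑ m ∈ Finset.Icc 1 ℓ, B m u := by
    have := h.P_nonneg hℓ hu
    positivity
  calc -1 * P ℓ u ≤ (s ℓ)⁻¹ * P ℓ u * ∑ m ∈ Finset.Icc 1 ℓ, B m u - P ℓ u := by linarith
    _ = _ := by field_simp

theorem hasDerivAt_mul_log_P (h : IsSolutionLV n r s B P) {ℓ : ℕ} (hℓ : ℓ ∈ Finset.Icc 1 n)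
    (hsℓ : s ℓ ≠ 0) {t : ℝ} (ht : 0 ≤ t) (hP : 0 < P ℓ t) :
    HasDerivAt (fun u => s ℓ * log (P ℓ u)) (∑ m ∈ Finset.Icc 1 ℓ, B m t - s ℓ) t := by
  refine (((h.2.1 ℓ hℓ t ht).log hP.ne').const_mul (s ℓ)).congr_deriv ?_
  field_simp

theorem mul_log_P_sub_mul_log_P_add_eq (h : IsSolutionLV n r s B P) {i j : ℕ}
    (hi : i ∈ Finset.Icc 1 n) (hj : j ∈ Finset.Icc 1 n) (hsi : 0 < s i) (hsj : 0 < s j)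
    (hPi : ∀ t, 0 ≤ t → 0 < P i t) (hPj : ∀ t, 0 ≤ t → 0 < P j t)
    (hQ : ∀ t, 0 ≤ t → ∑ m ∈ Finset.Icc 1 j, B m t = ∑ m ∈ Finset.Icc 1 i, B m t)
    {t : ℝ} (ht : 0 ≤ t) :
    s j * log (P j t) - s i * log (P i t) + (s j - s i) * t
      = s j * log (P j 0) - s i * log (P i 0) := by
  have hderiv : ∀ u, 0 ≤ u → HasDerivAt
      (fun u => s j * log (P j u) - s i * log (P i u) + (s j - s i) * u) 0 u := fun u hu => by
    refine (((h.hasDerivAt_mul_log_P hj hsj.ne' hu (hPj u hu)).sub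
      (h.hasDerivAt_mul_log_P hi hsi.ne' hu (hPi u hu))).add
      ((hasDerivAt_id' u).const_mul (s j - s i))).congr_deriv ?_
    rw [hQ u hu]
    ring
  simpa using eq_of_hasDerivAt_zero_of_nonneg hderiv ht

end IsSolutionLV

theorem stmt8_general
    (n : ℕ) (r s : ℕ → ℝ)
    (hs1 : 0 < s 1) (hs : ∀ i, 1 ≤ i → i < n → s i < s (i + 1))
    (B P : ℕ → ℝ → ℝ) (hsol : IsSolutionLV n r s B P)
    (i j : ℕ) (h1i : 1 ≤ i) (hij : i < j) (hjn : j ≤ n)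
    (hPi0 : 0 < P i 0) (hPj0 : 0 < P j 0)
    (hB0 : ∀ k, i < k → k ≤ j → B k 0 = 0) :
    Tendsto (P j) atTop (nhds 0) := by
  have hmono : StrictMonoOn s (Finset.Icc 1 n) := by
    simpa only [Finset.coe_Icc] using strictMonoOn_Icc_of_lt_add_one hs
  have hi : i ∈ Finset.Icc 1 n := Finset.mem_Icc.2 ⟨h1i, by omega⟩
  have hj : j ∈ Finset.Icc 1 n := Finset.mem_Icc.2 ⟨by omega, hjn⟩
  have hspos : ∀ m ∈ Finset.Icc 1 n, 0 < s m := fun m hm =>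
    hs1.trans_le (hmono.monotoneOn (Finset.mem_Icc.2 ⟨le_rfl, (Finset.mem_Icc.1 hm).1.trans
      (Finset.mem_Icc.1 hm).2⟩) hm (Finset.mem_Icc.1 hm).1)
  have hPi := fun t ht => hsol.P_pos hi (hspos i hi) hPi0 (t := t) ht
  have hPj := fun t ht => hsol.P_pos hj (hspos j hj) hPj0 (t := t) ht
  have hQ : ∀ t, 0 ≤ t → ∑ m ∈ Finset.Icc 1 j, B m t = ∑ m ∈ Finset.Icc 1 i, B m t :=
    fun t ht => sum_Icc_one_eq_of_eq_zero hij.le fun k hik hkj =>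
      hsol.B_eq_zero (fun m hm => (hspos m hm).le) (Finset.mem_Icc.2 ⟨by omega, by omega⟩)
        (hB0 k hik hkj) ht
  refine tendsto_zero_of_mul_log_le (hspos j hj) (sub_pos.2 (hmono hi hj hij)) hPj
    (C := s j * log (P j 0) - s i * log (P i 0) - s i * log (s i)) fun t ht => ?_
  have hPi_le : s i * log (s i) + s i * log (P i t) ≤ 0 := by
    rw [← mul_add, ← log_mul (hspos i hi).ne' (hPi t ht).ne']
    exact mul_nonpos_of_nonneg_of_nonpos (hspos i hi).le
      (log_nonpos (mul_pos (hspos i hi) (hPi t ht)).le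
        (hsol.mul_P_le_one (fun m hm => (hspos m hm).le) hi ht))
  linarith [hsol.mul_log_P_sub_mul_log_P_add_eq hi hj (hspos i hi) (hspos j hj) hPi hPj hQ ht]

theorem stmt8
    (n : ℕ) (hn : 1 ≤ n) (r s : ℕ → ℝ)
    (hr : ∀ i, 1 ≤ i → i < n → r (i + 1) < r i) (hrn : 1 < r n)
    (hs1 : 0 < s 1) (hs : ∀ i, 1 ≤ i → i < n → s i < s (i + 1))
    (B P : ℕ → ℝ → ℝ) (hsol : IsSolutionLV n r s B P)
    (i j : ℕ) (h1i : 1 ≤ i) (hij : i < j) (hjn : j ≤ n)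
    (hPi0 : 0 < P i 0) (hPj0 : 0 < P j 0)
    (hB0 : ∀ k, i < k → k ≤ j → B k 0 = 0) :
    Tendsto (P j) atTop (nhds 0) :=
  stmt8_general n r s hs1 hs B P hsol i j h1i hij hjn hPi0 hPj0 hB0
end

section
/- Let (B,P) be a solution of (LV) in Ω and set U(t) = Σ_{i=1}^n (B_i(t) + s_i P_i(t)) and W(t) = Σ_{i=1}^n r_i B_i(t). Then limsup_{t→∞} U(t) ≤ W^∞/(1 + W^∞) ≤ r_1/(1 + r_1), where W^∞ = limsup_{t→∞} W(t). -/
open Filter Topology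

/-!
Summing the equations, the predation terms cancel, since
`∑ᵢ Bᵢ ∑_{j ≥ i} Pⱼ = ∑ⱼ Pⱼ ∑_{i ≤ j} Bᵢ`, and `U' = W (1 - U) - U`.
Once `W < w` and as `U ≤ 1`, this gives `U' ≤ -(1 + w) (U - w / (1 + w))`, so `U` approaches
`w / (1 + w)` at an exponential rate; letting `w` decrease to `W^∞` gives the first bound.
The second one follows from `W ≤ r₁ U ≤ r₁` and the monotonicity of `x ↦ x / (1 + x)`.
-/

theorem limsup_le_of_hasDerivAt_le_neg_mul {u u' : ℝ → ℝ} {k a : ℝ} (hk : 0 < k)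
    (hu : IsCoboundedUnder (· ≤ ·) atTop u)
    (hderiv : ∀ᶠ t in atTop, HasDerivAt u (u' t) t ∧ u' t ≤ -k * (u t - a)) :
    limsup u atTop ≤ a := by
  obtain ⟨T, hT⟩ := eventually_atTop.mp hderiv
  set g : ℝ → ℝ := fun t => (u t - a) * Real.exp (k * t)
  have hg : ∀ t ≥ T, HasDerivAt g ((u' t + k * (u t - a)) * Real.exp (k * t)) t :=
    fun t ht => (((hT t ht).1.sub_const a).fun_mul
      ((hasDerivAt_id' t).const_mul k).exp).congr_deriv (by ring)
  have hg_anti : AntitoneOn g (Set.Ici T) := by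
    refine antitoneOn_of_hasDerivWithinAt_nonpos (convex_Ici T)
      (fun t ht => (hg t ht).continuousAt.continuousWithinAt)
      (fun t ht => (hg t (interior_subset ht)).hasDerivWithinAt) fun t ht => ?_
    have := (hT t (interior_subset ht)).2
    exact mul_nonpos_of_nonpos_of_nonneg (by linarith) (Real.exp_pos _).le
  have hbound : ∀ t ≥ T, u t ≤ a + g T / Real.exp (k * t) := fun t ht => by
    have h : u t - a ≤ g T / Real.exp (k * t) :=
      (le_div_iff₀ (Real.exp_pos _)).mpr (hg_anti Set.self_mem_Ici ht ht)
    linarith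
  have htend : Tendsto (fun t => a + g T / Real.exp (k * t)) atTop (𝓝 a) := by
    simpa using (tendsto_const_nhds.div_atTop
      (Real.tendsto_exp_atTop.comp (tendsto_id.const_mul_atTop hk))).const_add a
  calc limsup u atTop ≤ limsup (fun t => a + g T / Real.exp (k * t)) atTop :=
        limsup_le_limsup (eventually_atTop.mpr ⟨T, hbound⟩) hu htend.isBoundedUnder_le
    _ = a := htend.limsup_eq

theorem limsup_le_limsup_div_one_add {u v : ℝ → ℝ}
    (hderiv : ∀ᶠ t in atTop, HasDerivAt u (v t * (1 - u t) - u t) t)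
    (hu0 : ∀ᶠ t in atTop, 0 ≤ u t) (hu1 : ∀ᶠ t in atTop, u t ≤ 1)
    (hv0 : ∀ᶠ t in atTop, 0 ≤ v t) (hv : IsBoundedUnder (· ≤ ·) atTop v) :
    limsup u atTop ≤ limsup v atTop / (1 + limsup v atTop) := by
  set L := limsup v atTop
  have hL : 0 ≤ L := le_limsup_of_frequently_le hv0.frequently hv
  have hu : IsCoboundedUnder (· ≤ ·) atTop u := isCoboundedUnder_le_of_eventually_le atTop hu0
  have hw : ∀ w ∈ Set.Ioi L, limsup u atTop ≤ w / (1 + w) := fun w hLw => by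
    refine limsup_le_of_hasDerivAt_le_neg_mul (u' := fun t => v t * (1 - u t) - u t)
      (k := 1 + w) (by linarith [hLw.out]) hu ?_
    filter_upwards [hderiv, hu1, eventually_lt_of_limsup_lt hLw.out hv] with t hdt hut hvt
    refine ⟨hdt, ?_⟩
    have hcancel : (1 + w) * (w / (1 + w)) = w := mul_div_cancel₀ _ (by linarith [hLw.out])
    nlinarith [mul_le_mul_of_nonneg_right hvt.le (sub_nonneg.mpr hut)]
  have hcont : ContinuousAt (fun w => w / (1 + w)) L :=
    continuousAt_id.div (continuousAt_const.add continuousAt_id) (by linarith)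
  exact ge_of_tendsto (hcont.tendsto.mono_left nhdsWithin_le_nhds)
    (eventually_nhdsWithin_of_forall hw)

theorem div_one_add_le_div_one_add {α : Type*} [Field α] [LinearOrder α] [IsStrictOrderedRing α]
    {x y : α} (hx : 0 ≤ x) (hxy : x ≤ y) : x / (1 + x) ≤ y / (1 + y) := by
  rw [div_le_div_iff₀ (by linarith) (by linarith)]
  linarith

theorem Finset.sum_mul_sum_Icc_comm {ι R : Type*} [Preorder ι] [LocallyFiniteOrder ι]
    [CommSemiring R] (m n : ι) (f g : ι → R) :
    ∑ i ∈ Finset.Icc m n, f i * ∑ j ∈ Finset.Icc i n, g j =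
      ∑ j ∈ Finset.Icc m n, g j * ∑ i ∈ Finset.Icc m j, f i := by
  simp_rw [Finset.mul_sum]
  refine Finset.sum_comm' (fun i j => ?_) |>.trans (Finset.sum_congr rfl fun _ _ =>
    Finset.sum_congr rfl fun _ _ => mul_comm _ _)
  simp only [Finset.mem_Icc]
  exact ⟨fun ⟨⟨hmi, hin⟩, hij, hjn⟩ => ⟨⟨hmi, hij⟩, hmi.trans hij, hjn⟩,
    fun ⟨⟨hmi, hij⟩, _, hjn⟩ => ⟨⟨hmi, hij.trans hjn⟩, hij, hjn⟩⟩

-- `U` and `W` of the statement.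
def totalMass (n : ℕ) (s : ℕ → ℝ) (B P : ℕ → ℝ → ℝ) (t : ℝ) : ℝ :=
  ∑ i ∈ Finset.Icc 1 n, (B i t + s i * P i t)

def weightedBiomass (n : ℕ) (r : ℕ → ℝ) (B : ℕ → ℝ → ℝ) (t : ℝ) : ℝ :=
  ∑ i ∈ Finset.Icc 1 n, r i * B i t

namespace IsSolutionLV

variable {n : ℕ} {r s : ℕ → ℝ} {B P : ℕ → ℝ → ℝ} {t : ℝ}

theorem hasDerivAt_totalMass (hsol : IsSolutionLV n r s B P)
    (hr : ∀ i ∈ Finset.Icc 1 n, r i ≠ 0) (hs : ∀ i ∈ Finset.Icc 1 n, s i ≠ 0)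
    (ht : 0 ≤ t) :
    HasDerivAt (totalMass n s B P)
      (weightedBiomass n r B t * (1 - totalMass n s B P t) - totalMass n s B P t) t := by
  have hsum := HasDerivAt.fun_sum fun i hi =>
    (hsol.1 i hi t ht).add ((hsol.2.1 i hi t ht).const_mul (s i))
  refine hsum.congr_deriv ?_
  have hterm : ∀ i ∈ Finset.Icc 1 n,
      r i * B i t * (1 - 1 / r i - totalMass n s B P t) - B i t * ∑ j ∈ Finset.Icc i n, P j t
          + s i * ((s i)⁻¹ * P i t * ((∑ j ∈ Finset.Icc 1 i, B j t) - s i)) =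
        r i * B i t * (1 - totalMass n s B P t) - (B i t + s i * P i t)
          - (B i t * ∑ j ∈ Finset.Icc i n, P j t - P i t * ∑ j ∈ Finset.Icc 1 i, B j t) :=
    fun i hi => by
      field_simp [hr i hi, hs i hi]
      ring
  refine (Finset.sum_congr rfl hterm).trans ?_
  rw [Finset.sum_sub_distrib, Finset.sum_sub_distrib,
    Finset.sum_sub_distrib, Finset.sum_mul_sum_Icc_comm, sub_self, sub_zero, ← Finset.sum_mul]
  rfl

theorem totalMass_nonneg (hsol : IsSolutionLV n r s B P) (hs : ∀ i ∈ Finset.Icc 1 n, 0 ≤ s i)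
    (ht : 0 ≤ t) : 0 ≤ totalMass n s B P t :=
  Finset.sum_nonneg fun i hi => by
    obtain ⟨hB, hP⟩ := (hsol.2.2 t ht).1 i hi
    have := hs i hi
    positivity

theorem totalMass_le_one (hsol : IsSolutionLV n r s B P) (ht : 0 ≤ t) :
    totalMass n s B P t ≤ 1 :=
  (hsol.2.2 t ht).2

theorem weightedBiomass_nonneg (hsol : IsSolutionLV n r s B P)
    (hr : ∀ i ∈ Finset.Icc 1 n, 0 ≤ r i) (ht : 0 ≤ t) : 0 ≤ weightedBiomass n r B t :=
  Finset.sum_nonneg fun i hi => mul_nonneg (hr i hi) ((hsol.2.2 t ht).1 i hi).1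

theorem weightedBiomass_le (hsol : IsSolutionLV n r s B P) {ρ : ℝ} (hρ : 0 ≤ ρ)
    (hr : ∀ i ∈ Finset.Icc 1 n, r i ≤ ρ) (hs : ∀ i ∈ Finset.Icc 1 n, 0 ≤ s i)
    (ht : 0 ≤ t) :
    weightedBiomass n r B t ≤ ρ :=
  calc weightedBiomass n r B t ≤ ρ * totalMass n s B P t := by
        rw [weightedBiomass, totalMass, Finset.mul_sum]
        refine Finset.sum_le_sum fun i hi => ?_
        obtain ⟨hB, hP⟩ := (hsol.2.2 t ht).1 i hi
        nlinarith [mul_nonneg hρ (mul_nonneg (hs i hi) hP),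
          mul_le_mul_of_nonneg_right (hr i hi) hB]
    _ ≤ ρ := mul_le_of_le_one_right hρ (hsol.totalMass_le_one ht)

end IsSolutionLV

theorem stmt10
    (n : ℕ) (hn : 1 ≤ n) (r s : ℕ → ℝ)
    (hr : ∀ i, 1 ≤ i → i < n → r (i + 1) < r i) (hrn : 1 < r n)
    (hs1 : 0 < s 1) (hs : ∀ i, 1 ≤ i → i < n → s i < s (i + 1))
    (B P : ℕ → ℝ → ℝ) (hsol : IsSolutionLV n r s B P) :
    limsup (fun t => ∑ i ∈ Finset.Icc 1 n, (B i t + s i * P i t)) atTop ≤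
      (limsup (fun t => ∑ i ∈ Finset.Icc 1 n, r i * B i t) atTop) /
        (1 + limsup (fun t => ∑ i ∈ Finset.Icc 1 n, r i * B i t) atTop) ∧
    (limsup (fun t => ∑ i ∈ Finset.Icc 1 n, r i * B i t) atTop) /
        (1 + limsup (fun t => ∑ i ∈ Finset.Icc 1 n, r i * B i t) atTop) ≤
      r 1 / (1 + r 1) := by
  have hr_anti : AntitoneOn r (Set.Icc 1 n) :=
    antitoneOn_of_add_one_le Set.ordConnected_Icc fun i _ hi hi' => (hr i hi.1 hi'.2).le
  have hs_mono : MonotoneOn s (Set.Icc 1 n) :=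
    monotoneOn_of_le_add_one Set.ordConnected_Icc fun i _ hi hi' => (hs i hi.1 hi'.2).le
  have h1 : 1 ∈ Set.Icc 1 n := ⟨le_rfl, hn⟩
  have hr_le (i) (hi : i ∈ Finset.Icc 1 n) : r i ≤ r 1 :=
    hr_anti h1 (Finset.mem_Icc.mp hi) (Finset.mem_Icc.mp hi).1
  have hr_pos (i) (hi : i ∈ Finset.Icc 1 n) : 0 < r i :=
    (zero_lt_one.trans hrn).trans_le
      (hr_anti (Finset.mem_Icc.mp hi) ⟨hn, le_rfl⟩ (Finset.mem_Icc.mp hi).2)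
  have hs_pos (i) (hi : i ∈ Finset.Icc 1 n) : 0 < s i :=
    hs1.trans_le (hs_mono h1 (Finset.mem_Icc.mp hi) (Finset.mem_Icc.mp hi).1)
  have hr1 : 0 ≤ r 1 := (hr_pos 1 (Finset.mem_Icc.mpr h1)).le
  have hW0 : ∀ᶠ t in atTop, 0 ≤ weightedBiomass n r B t := (eventually_ge_atTop 0).mono
    fun t ht => hsol.weightedBiomass_nonneg (fun i hi => (hr_pos i hi).le) ht
  have hW_le : ∀ᶠ t in atTop, weightedBiomass n r B t ≤ r 1 := (eventually_ge_atTop 0).mono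
    fun t ht => hsol.weightedBiomass_le hr1 hr_le (fun i hi => (hs_pos i hi).le) ht
  have hL0 : 0 ≤ limsup (weightedBiomass n r B) atTop :=
    le_limsup_of_frequently_le hW0.frequently (isBoundedUnder_of_eventually_le hW_le)
  have hL_le : limsup (weightedBiomass n r B) atTop ≤ r 1 :=
    limsup_le_of_le (isCoboundedUnder_le_of_eventually_le atTop hW0) hW_le
  refine ⟨limsup_le_limsup_div_one_add ?_ ?_ ?_ hW0 (isBoundedUnder_of_eventually_le hW_le), ?_⟩
  · exact (eventually_ge_atTop 0).mono fun t ht => hsol.hasDerivAt_totalMass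
      (fun i hi => (hr_pos i hi).ne') (fun i hi => (hs_pos i hi).ne') ht
  · exact (eventually_ge_atTop 0).mono fun t ht =>
      hsol.totalMass_nonneg (fun i hi => (hs_pos i hi).le) ht
  · exact (eventually_ge_atTop 0).mono fun t ht => hsol.totalMass_le_one ht
  · exact div_one_add_le_div_one_add hL0 hL_le
end

section
/- Assume the coexistence condition (ss): r_n/(1+Q_n) > 1. Let (B,P) be a solution of (LV) in Ω and let 1 ≤ i ≤ n. If P_i(0) > 0, then liminf_{t→∞} Σ_{j=1}^i B_j(t) ≤ s_i. -/
open Filter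

/-!
If `∑_{j ≤ i} B_j ≥ c > s_i` from some time `T` on, then the equation for `P_i` gives
`P_i' ≥ k P_i` with `k = (c - s_i)/s_i > 0`, so `P_i(t) ≥ P_i(T) e^{k (t - T)}`. Since
`P_i(T) > 0` (the same comparison with `c = 0` gives `P_i(t) ≥ P_i(0) e^{-t}`), `P_i` is
unbounded, whereas `s_i P_i ≤ 1` on `Ω`.
-/

open Real Set

theorem mul_exp_le_of_mul_le_deriv_s11 {f f' : ℝ → ℝ} {a k : ℝ}
    (hf : ∀ t, a ≤ t → HasDerivAt f (f' t) t) (hf' : ∀ t, a ≤ t → k * f t ≤ f' t)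
    {t : ℝ} (ht : a ≤ t) : f a * exp (k * (t - a)) ≤ f t := by
  set g : ℝ → ℝ := fun u => f u * exp (-k * u)
  have hg : ∀ u, a ≤ u → HasDerivAt g ((f' u - k * f u) * exp (-k * u)) u := by
    intro u hu
    exact ((hf u hu).mul ((hasDerivAt_id' u).const_mul (-k)).exp).congr_deriv (by ring)
  have hmono : MonotoneOn g (Ici a) := by
    refine monotoneOn_of_hasDerivWithinAt_nonneg (f' := fun u => (f' u - k * f u) * exp (-k * u))
      (convex_Ici a)
      (fun u hu => (hg u hu).continuousAt.continuousWithinAt) (fun u hu => ?_) (fun u hu => ?_)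
    all_goals rw [interior_Ici] at hu
    · exact (hg u hu.le).hasDerivWithinAt
    · exact mul_nonneg (sub_nonneg.2 (hf' u hu.le)) (exp_pos _).le
  calc f a * exp (k * (t - a)) = g a * exp (k * t) := by
        simp only [g, mul_assoc, ← exp_add]
        ring_nf
    _ ≤ g t * exp (k * t) := by gcongr; exact hmono self_mem_Ici ht ht
    _ = f t := by simp only [g, mul_assoc, ← exp_add, neg_mul, neg_add_cancel, exp_zero, mul_one]

theorem tendsto_atTop_of_mul_le_deriv {f f' : ℝ → ℝ} {a k : ℝ} (hk : 0 < k) (ha : 0 < f a)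
    (hf : ∀ t, a ≤ t → HasDerivAt f (f' t) t) (hf' : ∀ t, a ≤ t → k * f t ≤ f' t) :
    Tendsto f atTop atTop := by
  refine tendsto_atTop_mono' atTop ?_ ((tendsto_exp_atTop.comp
    ((tendsto_atTop_add_const_right _ (-a) tendsto_id).const_mul_atTop hk)).const_mul_atTop ha)
  filter_upwards [eventually_ge_atTop a] with t ht
  simpa [sub_eq_add_neg] using mul_exp_le_of_mul_le_deriv_s11 hf hf' ht

theorem pos_of_pos_of_lt_succ {s : ℕ → ℝ} {n : ℕ} (hs1 : 0 < s 1)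
    (hs : ∀ i, 1 ≤ i → i < n → s i < s (i + 1)) {j : ℕ} (hj1 : 1 ≤ j) (hjn : j ≤ n) :
    0 < s j := by
  induction j, hj1 using Nat.le_induction with
  | base => exact hs1
  | succ j hj ih => exact (ih (by omega)).trans (hs j hj (by omega))

namespace IsSolutionLV

variable {n : ℕ} {r s : ℕ → ℝ} {B P : ℕ → ℝ → ℝ} (hsol : IsSolutionLV n r s B P)
include hsol

theorem sum_B_nonneg_s11 {i : ℕ} (hin : i ≤ n) {t : ℝ} (ht : 0 ≤ t) :
    0 ≤ ∑ j ∈ Finset.Icc 1 i, B j t :=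
  Finset.sum_nonneg fun j hj =>
    ((hsol.2.2 t ht).1 j (Finset.Icc_subset_Icc_right hin hj)).1

theorem P_le_inv (hs : ∀ j ∈ Finset.Icc 1 n, 0 < s j) {i : ℕ} (hi : i ∈ Finset.Icc 1 n)
    {t : ℝ} (ht : 0 ≤ t) : P i t ≤ (s i)⁻¹ := by
  obtain ⟨hBP, hsum⟩ := hsol.2.2 t ht
  have hterm : ∀ j ∈ Finset.Icc 1 n, 0 ≤ B j t + s j * P j t := fun j hj =>
    add_nonneg (hBP j hj).1 (mul_nonneg (hs j hj).le (hBP j hj).2)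
  have hsP : s i * P i t ≤ 1 := by
    linarith [Finset.single_le_sum hterm hi, (hBP i hi).1]
  rwa [← one_div, le_div_iff₀' (hs i hi)]

theorem mul_P_le_deriv {i : ℕ} (hi : i ∈ Finset.Icc 1 n) (hsi : 0 < s i) {c t : ℝ}
    (ht : 0 ≤ t) (hc : c ≤ ∑ j ∈ Finset.Icc 1 i, B j t) :
    (c - s i) / s i * P i t ≤ (s i)⁻¹ * P i t * ((∑ j ∈ Finset.Icc 1 i, B j t) - s i) := by
  have hP := ((hsol.2.2 t ht).1 i hi).2
  have hdiff : (s i)⁻¹ * P i t * ((∑ j ∈ Finset.Icc 1 i, B j t) - s i) - (c - s i) / s i * P i t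
      = (s i)⁻¹ * P i t * ((∑ j ∈ Finset.Icc 1 i, B j t) - c) := by
    field_simp
    ring
  exact sub_nonneg.1 (hdiff ▸ mul_nonneg (mul_nonneg (inv_nonneg.2 hsi.le) hP) (sub_nonneg.2 hc))

theorem P_pos_s11 {i : ℕ} (hi : i ∈ Finset.Icc 1 n) (hsi : 0 < s i) (hP0 : 0 < P i 0)
    {t : ℝ} (ht : 0 ≤ t) : 0 < P i t := by
  have hexp := mul_exp_le_of_mul_le_deriv_s11 (hsol.2.1 i hi) (fun u hu =>
    hsol.mul_P_le_deriv hi hsi hu (hsol.sum_B_nonneg_s11 (Finset.mem_Icc.1 hi).2 hu)) ht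
  exact (by positivity : 0 < P i 0 * exp _).trans_le hexp

end IsSolutionLV

theorem stmt11_general
    (n : ℕ) (r s : ℕ → ℝ)
    (hs1 : 0 < s 1) (hs : ∀ i, 1 ≤ i → i < n → s i < s (i + 1))
    (B P : ℕ → ℝ → ℝ) (hsol : IsSolutionLV n r s B P)
    (i : ℕ) (h1i : 1 ≤ i) (hin : i ≤ n) (hPi0 : 0 < P i 0) :
    liminf (fun t => ∑ j ∈ Finset.Icc 1 i, B j t) atTop ≤ s i := by
  have hi : i ∈ Finset.Icc 1 n := Finset.mem_Icc.2 ⟨h1i, hin⟩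
  have hs_pos : ∀ j ∈ Finset.Icc 1 n, 0 < s j := fun j hj =>
    pos_of_pos_of_lt_succ hs1 hs (Finset.mem_Icc.1 hj).1 (Finset.mem_Icc.1 hj).2
  by_contra! hlt
  obtain ⟨c, hsc, hcS⟩ := exists_between hlt
  have hbdd : IsBoundedUnder (· ≥ ·) atTop (fun t => ∑ j ∈ Finset.Icc 1 i, B j t) :=
    isBoundedUnder_of_eventually_ge <|
      (eventually_ge_atTop 0).mono fun t ht => hsol.sum_B_nonneg_s11 hin ht
  obtain ⟨T, hT⟩ := eventually_atTop.1
    ((eventually_lt_of_lt_liminf hcS hbdd).and (eventually_ge_atTop 0))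
  have hgrow : Tendsto (P i) atTop atTop :=
    tendsto_atTop_of_mul_le_deriv (div_pos (sub_pos.2 hsc) (hs_pos i hi))
      (hsol.P_pos_s11 hi (hs_pos i hi) hPi0 (hT T le_rfl).2)
      (fun t ht => hsol.2.1 i hi t (hT t ht).2)
      (fun t ht => hsol.mul_P_le_deriv hi (hs_pos i hi) (hT t ht).2 (hT t ht).1.le)
  obtain ⟨t, hPt, ht⟩ := ((hgrow.eventually_gt_atTop (s i)⁻¹).and (eventually_ge_atTop 0)).exists
  exact (hsol.P_le_inv hs_pos hi ht).not_gt hPt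

theorem stmt11
    (n : ℕ) (hn : 1 ≤ n) (r s : ℕ → ℝ)
    (hr : ∀ i, 1 ≤ i → i < n → r (i + 1) < r i) (hrn : 1 < r n)
    (hs1 : 0 < s 1) (hs : ∀ i, 1 ≤ i → i < n → s i < s (i + 1))
    (hss : 1 < r n / (1 + lvQ r s n))
    (B P : ℕ → ℝ → ℝ) (hsol : IsSolutionLV n r s B P)
    (i : ℕ) (h1i : 1 ≤ i) (hin : i ≤ n) (hPi0 : 0 < P i 0) :
    liminf (fun t => ∑ j ∈ Finset.Icc 1 i, B j t) atTop ≤ s i :=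
  stmt11_general n r s hs1 hs B P hsol i h1i hin hPi0
end

section
/- Let (B,P) be a solution of (LV) in Ω and let 1 ≤ i < j ≤ n. If P_i(0) > 0 and limsup_{t→∞} (B_{i+1}(t) + B_{i+2}(t) + ⋯ + B_j(t)) < s_j − s_i, then P_j(t) → 0 as t → ∞. -/
open Filter

/-!
Along a solution, `P k t = P k 0 * exp (∫₀ᵗ g k)` with the per-capita growth rate
`g k = s k⁻¹ * (B 1 + ⋯ + B k - s k)` (`phageGrowthRate`). In `s j * g j - s i * g i` the
bacteria `B 1, …, B i` cancel, leaving `B (i+1) + ⋯ + B j - (s j - s i)`, which is eventually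
below a negative constant by the limsup hypothesis. Since `P i 0 > 0` and `s i * P i ≤ 1` in `Ω`,
`∫₀ᵗ g i` is bounded above, so `s j * ∫₀ᵗ g j → -∞` and `P j → 0`.
-/

open Topology MeasureTheory Set

theorem eq_mul_exp_integral_of_hasDerivAt {f g : ℝ → ℝ} (hg : ContinuousOn g (Ici 0))
    (hf : ∀ t, 0 ≤ t → HasDerivAt f (g t * f t) t) {t : ℝ} (ht : 0 ≤ t) :
    f t = f 0 * Real.exp (∫ τ in (0 : ℝ)..t, g τ) := by
  set G : ℝ → ℝ := fun u => ∫ τ in (0 : ℝ)..u, g τ with hG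
  have hG' : ∀ u, 0 ≤ u → HasDerivWithinAt G (g u) (Ici u) u := fun u hu =>
    intervalIntegral.integral_hasDerivWithinAt_right
      ((hg.mono (uIcc_of_le hu ▸ Icc_subset_Ici_self)).intervalIntegrable)
      ((hg.mono (Ioi_subset_Ici hu)).stronglyMeasurableAtFilter_nhdsWithin measurableSet_Ioi u)
      ((hg u hu).mono (Ioi_subset_Ici hu))
  -- `f * exp (-G)` has zero right derivative, hence is constant on `[0, t]`
  have hconst := constant_of_has_deriv_right_zero (f := fun u => f u * Real.exp (-G u))
    (a := 0) (b := t) ?_ ?_ t (right_mem_Icc.2 ht)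
  · simp only [hG, intervalIntegral.integral_same, neg_zero, Real.exp_zero, mul_one] at hconst
    rw [← hconst, mul_assoc, ← Real.exp_add, neg_add_cancel, Real.exp_zero, mul_one]
  · have hGc : ContinuousOn G (Icc 0 t) := by
      rw [← uIcc_of_le ht]
      exact intervalIntegral.continuousOn_primitive_interval'
        ((hg.mono (uIcc_of_le ht ▸ Icc_subset_Ici_self)).intervalIntegrable) left_mem_uIcc
    exact (continuousOn_of_forall_continuousAt fun u hu => (hf u hu.1).continuousAt).mul
      hGc.neg.rexp
  · intro u hu
    have h := (hf u hu.1).hasDerivWithinAt.mul (hG' u hu.1).neg.exp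
    rwa [show g u * f u * _ + f u * (_ * -g u) = 0 by ring] at h

theorem tendsto_integral_atBot_of_eventually_le_neg {F : ℝ → ℝ}
    (hF : ∀ t, 0 ≤ t → IntervalIntegrable F volume 0 t) {ε : ℝ} (hε : 0 < ε)
    (hle : ∀ᶠ τ in atTop, F τ ≤ -ε) :
    Tendsto (fun t => ∫ τ in (0 : ℝ)..t, F τ) atTop atBot := by
  obtain ⟨T, hT⟩ := (hle.and (eventually_ge_atTop 0)).exists_forall_of_atTop
  have hT0 : 0 ≤ T := (hT T le_rfl).2
  have hbound : ∀ t, T ≤ t →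
      ∫ τ in (0 : ℝ)..t, F τ ≤ (∫ τ in (0 : ℝ)..T, F τ) + -ε * (t - T) := by
    intro t ht
    have hTt : IntervalIntegrable F volume T t := (hF T hT0).symm.trans (hF t (hT0.trans ht))
    rw [← intervalIntegral.integral_add_adjacent_intervals (hF T hT0) hTt]
    gcongr
    calc ∫ τ in T..t, F τ ≤ ∫ _ in T..t, -ε :=
          intervalIntegral.integral_mono_on ht hTt intervalIntegrable_const
            fun τ hτ => (hT τ hτ.1).1
      _ = -ε * (t - T) := by simp [mul_comm]
  refine tendsto_atBot_mono' atTop ((eventually_ge_atTop T).mono hbound) ?_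
  exact tendsto_atBot_add_const_left _ _
    ((tendsto_atTop_add_const_right _ (-T) tendsto_id).const_mul_atTop_of_neg
      (neg_lt_zero.2 hε))

noncomputable def phageGrowthRate (s : ℕ → ℝ) (B : ℕ → ℝ → ℝ) (k : ℕ) (t : ℝ) : ℝ :=
  (s k)⁻¹ * ((∑ m ∈ Finset.Icc 1 k, B m t) - s k)

theorem s_mul_phageGrowthRate_sub_s_mul_phageGrowthRate {s : ℕ → ℝ} {B : ℕ → ℝ → ℝ}
    {i j : ℕ} (hij : i ≤ j) (hi : s i ≠ 0) (hj : s j ≠ 0) (t : ℝ) :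
    s j * phageGrowthRate s B j t - s i * phageGrowthRate s B i t
      = (∑ m ∈ Finset.Icc (i + 1) j, B m t) - (s j - s i) := by
  have hsplit := Finset.sum_Ioc_consecutive (fun m => B m t) (Nat.zero_le i) hij
  simp only [← Finset.Icc_add_one_left_eq_Ioc, zero_add] at hsplit
  simp only [phageGrowthRate, ← mul_assoc, mul_inv_cancel₀ hi, mul_inv_cancel₀ hj, one_mul,
    ← hsplit]
  ring

namespace IsSolutionLV

variable {n : ℕ} {r s : ℕ → ℝ} {B P : ℕ → ℝ → ℝ}

theorem continuousOn_B (hsol : IsSolutionLV n r s B P) {m : ℕ} (hm : m ∈ Finset.Icc 1 n) :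
    ContinuousOn (B m) (Ici 0) :=
  continuousOn_of_forall_continuousAt fun t ht => (hsol.1 m hm t ht).continuousAt

theorem continuousOn_phageGrowthRate (hsol : IsSolutionLV n r s B P) {k : ℕ} (hk : k ≤ n) :
    ContinuousOn (phageGrowthRate s B k) (Ici 0) :=
  continuousOn_const.mul ((continuousOn_finsetSum _ fun _ hm =>
    hsol.continuousOn_B (Finset.Icc_subset_Icc_right hk hm)).sub continuousOn_const)

theorem intervalIntegrable_phageGrowthRate (hsol : IsSolutionLV n r s B P) {k : ℕ} (hk : k ≤ n)
    {t : ℝ} (ht : 0 ≤ t) : IntervalIntegrable (phageGrowthRate s B k) volume 0 t :=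
  ((hsol.continuousOn_phageGrowthRate hk).mono
    (uIcc_of_le ht ▸ Icc_subset_Ici_self)).intervalIntegrable

theorem P_eq_mul_exp_integral (hsol : IsSolutionLV n r s B P) {k : ℕ} (hk : k ∈ Finset.Icc 1 n)
    {t : ℝ} (ht : 0 ≤ t) :
    P k t = P k 0 * Real.exp (∫ τ in (0 : ℝ)..t, phageGrowthRate s B k τ) := by
  refine eq_mul_exp_integral_of_hasDerivAt
    (hsol.continuousOn_phageGrowthRate (Finset.mem_Icc.1 hk).2) (fun u hu => ?_) ht
  convert hsol.2.1 k hk u hu using 1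
  simp only [phageGrowthRate]
  ring

theorem sum_le_one (hsol : IsSolutionLV n r s B P) (hs : ∀ m ∈ Finset.Icc 1 n, 0 ≤ s m)
    {S : Finset ℕ} (hS : S ⊆ Finset.Icc 1 n) {t : ℝ} (ht : 0 ≤ t) :
    ∑ m ∈ S, (B m t + s m * P m t) ≤ 1 := by
  obtain ⟨hnonneg, htotal⟩ := hsol.2.2 t ht
  refine (Finset.sum_le_sum_of_subset_of_nonneg hS fun m hm _ => ?_).trans htotal
  exact add_nonneg (hnonneg m hm).1 (mul_nonneg (hs m hm) (hnonneg m hm).2)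

theorem isBoundedUnder_sum_B (hsol : IsSolutionLV n r s B P)
    (hs : ∀ m ∈ Finset.Icc 1 n, 0 ≤ s m) {S : Finset ℕ} (hS : S ⊆ Finset.Icc 1 n) :
    IsBoundedUnder (· ≤ ·) atTop (fun t => ∑ m ∈ S, B m t) := by
  refine isBoundedUnder_of_eventually_le (a := 1) ?_
  filter_upwards [eventually_ge_atTop 0] with t ht
  refine le_trans (Finset.sum_le_sum fun m hm => ?_) (hsol.sum_le_one hs hS ht)
  exact le_add_of_nonneg_right (mul_nonneg (hs m (hS hm)) ((hsol.2.2 t ht).1 m (hS hm)).2)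

theorem integral_phageGrowthRate_le_log (hsol : IsSolutionLV n r s B P)
    (hs : ∀ m ∈ Finset.Icc 1 n, 0 ≤ s m) {k : ℕ} (hk : k ∈ Finset.Icc 1 n) (hsk : 0 < s k)
    (hPk : 0 < P k 0) {t : ℝ} (ht : 0 ≤ t) :
    ∫ τ in (0 : ℝ)..t, phageGrowthRate s B k τ ≤ Real.log (s k * P k 0)⁻¹ := by
  have hkt : s k * P k t ≤ 1 := by
    have hsum := hsol.sum_le_one hs (Finset.singleton_subset_iff.2 hk) ht
    rw [Finset.sum_singleton] at hsum
    linarith [((hsol.2.2 t ht).1 k hk).1]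
  rw [hsol.P_eq_mul_exp_integral hk ht, ← mul_assoc] at hkt
  rwa [Real.le_log_iff_exp_le (inv_pos.2 (mul_pos hsk hPk)), ← one_div,
    le_div_iff₀' (mul_pos hsk hPk)]

theorem tendsto_integral_phageGrowthRate_atBot (hsol : IsSolutionLV n r s B P)
    (hs : ∀ m ∈ Finset.Icc 1 n, 0 < s m) {i j : ℕ} (hi : i ∈ Finset.Icc 1 n) (hij : i ≤ j)
    (hj : j ∈ Finset.Icc 1 n) (hPi : 0 < P i 0) {c : ℝ} (hc : c < s j - s i)
    (hB : ∀ᶠ t in atTop, ∑ m ∈ Finset.Icc (i + 1) j, B m t ≤ c) :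
    Tendsto (fun t => ∫ τ in (0 : ℝ)..t, phageGrowthRate s B j τ) atTop atBot := by
  have hint : ∀ k ∈ Finset.Icc 1 n, ∀ t, 0 ≤ t →
      IntervalIntegrable (phageGrowthRate s B k) volume 0 t :=
    fun k hk _ ht => hsol.intervalIntegrable_phageGrowthRate (Finset.mem_Icc.1 hk).2 ht
  have hdiff : Tendsto (fun t => ∫ τ in (0 : ℝ)..t,
      (s j * phageGrowthRate s B j τ - s i * phageGrowthRate s B i τ)) atTop atBot := by
    refine tendsto_integral_atBot_of_eventually_le_neg
      (fun t ht => ((hint j hj t ht).const_mul _).sub ((hint i hi t ht).const_mul _))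
      (sub_pos.2 hc) ?_
    filter_upwards [hB] with τ hτ
    rw [s_mul_phageGrowthRate_sub_s_mul_phageGrowthRate hij (hs i hi).ne' (hs j hj).ne']
    linarith
  rw [← tendsto_const_mul_atBot_of_pos (hs j hj)]
  refine tendsto_atBot_mono' atTop ?_
    (tendsto_atBot_add_const_left _ (s i * Real.log (s i * P i 0)⁻¹) hdiff)
  filter_upwards [eventually_ge_atTop 0] with t ht
  rw [intervalIntegral.integral_sub ((hint j hj t ht).const_mul _) ((hint i hi t ht).const_mul _),
    intervalIntegral.integral_const_mul, intervalIntegral.integral_const_mul]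
  have hPi_bound := mul_le_mul_of_nonneg_left
    (hsol.integral_phageGrowthRate_le_log (fun m hm => (hs m hm).le) hi (hs i hi) hPi ht)
    (hs i hi).le
  linarith

end IsSolutionLV

theorem stmt14_general
    (n : ℕ) (r s : ℕ → ℝ)
    (hs1 : 0 < s 1) (hs : ∀ i, 1 ≤ i → i < n → s i < s (i + 1))
    (B P : ℕ → ℝ → ℝ) (hsol : IsSolutionLV n r s B P)
    (i j : ℕ) (h1i : 1 ≤ i) (hij : i < j) (hjn : j ≤ n)
    (hPi0 : 0 < P i 0)
    (hlim : limsup (fun t => ∑ m ∈ Finset.Icc (i + 1) j, B m t) atTop < s j - s i) :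
    Tendsto (P j) atTop (nhds 0) := by
  have hs_mono : MonotoneOn s (Icc 1 n) :=
    monotoneOn_of_le_add_one ordConnected_Icc fun a _ ha ha1 => (hs a ha.1 ha1.2).le
  have hs_pos : ∀ m ∈ Finset.Icc 1 n, 0 < s m := fun m hm => by
    obtain ⟨h1m, hmn⟩ := Finset.mem_Icc.1 hm
    exact hs1.trans_le (hs_mono ⟨le_rfl, h1m.trans hmn⟩ ⟨h1m, hmn⟩ h1m)
  have hi : i ∈ Finset.Icc 1 n := Finset.mem_Icc.2 ⟨h1i, by omega⟩
  have hj : j ∈ Finset.Icc 1 n := Finset.mem_Icc.2 ⟨by omega, hjn⟩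
  obtain ⟨c, hc_lim, hc⟩ := exists_between hlim
  have hB : ∀ᶠ t in atTop, ∑ m ∈ Finset.Icc (i + 1) j, B m t ≤ c :=
    (eventually_lt_of_limsup_lt hc_lim (hsol.isBoundedUnder_sum_B (fun m hm => (hs_pos m hm).le)
      (Finset.Icc_subset_Icc (by omega) hjn))).mono fun _ ht => ht.le
  have hrate := hsol.tendsto_integral_phageGrowthRate_atBot hs_pos hi hij.le hj hPi0 hc hB
  have hPj := (Real.tendsto_exp_atBot.comp hrate).const_mul (P j 0)
  rw [mul_zero] at hPj
  exact hPj.congr' ((eventually_ge_atTop 0).mono fun _ ht =>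
    (hsol.P_eq_mul_exp_integral hj ht).symm)

theorem stmt14
    (n : ℕ) (hn : 1 ≤ n) (r s : ℕ → ℝ)
    (hr : ∀ i, 1 ≤ i → i < n → r (i + 1) < r i) (hrn : 1 < r n)
    (hs1 : 0 < s 1) (hs : ∀ i, 1 ≤ i → i < n → s i < s (i + 1))
    (B P : ℕ → ℝ → ℝ) (hsol : IsSolutionLV n r s B P)
    (i j : ℕ) (h1i : 1 ≤ i) (hij : i < j) (hjn : j ≤ n)
    (hPi0 : 0 < P i 0)
    (hlim : limsup (fun t => ∑ m ∈ Finset.Icc (i + 1) j, B m t) atTop < s j - s i) :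
    Tendsto (P j) atTop (nhds 0) :=
  stmt14_general n r s hs1 hs B P hsol i j h1i hij hjn hPi0 hlim
end
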